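/- Well-definedness and coset-type invariance of the Grassmannian Weingarten function: Fix integers k ≥ 1, N and M with k ≤ N and 1 ≤ M < N. If 𝔪, 𝔪′ ∈ 𝒫_k have the same coset-type λ(𝔪) = λ(𝔪′), then for any function i strongly admissible for 𝔪 and any function i′ strongly admissible for 𝔪′ one has ∫ ∏_{a=1}^{k} A_{i(2a−1)i(2a)} dμ(A) = ∫ ∏_{a=1}^{k} A_{i′(2a−1)i′(2a)} dμ(A). In particular Wg^A(𝔪) is well defined (independent of the strongly admissible function chosen) and depends only on the coset-type of 𝔪. -/

import Mathlib

open scoped Classical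
open MeasureTheory



/-- A pair partition of `{1, …, 2k}`, encoded as an involution of `ℕ` that
moves exactly the points `1, …, 2k`.  The pairs are the two-element sets `{a, f a}`. -/
structure PairPartition (k : ℕ) where
  f : ℕ → ℕ
  invol : ∀ a, f (f a) = a
  moves : ∀ a, f a ≠ a ↔ (1 ≤ a ∧ a ≤ 2 * k)

namespace PairPartition

/-- The function underlying the identity (trivial) pair partition
`(1 2 | 3 4 | ⋯ | 2k-1 2k)`. -/
def trivFun (k : ℕ) (a : ℕ) : ℕ :=
  if 1 ≤ a ∧ a ≤ 2 * k then (if a % 2 = 1 then a + 1 else a - 1) else a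

/-- The identity pair partition `𝔢_k = (1 2 | 3 4 | ⋯ | 2k-1 2k)`. -/
def triv (k : ℕ) : PairPartition k where
  f := trivFun k
  invol := by intro a; unfold trivFun; split_ifs <;> omega
  moves := by intro a; unfold trivFun; split_ifs <;> omega

theorem ext' {k : ℕ} {m m' : PairPartition k} (h : m.f = m'.f) : m = m' := by
  cases m; cases m'; simpa using h

/-- The action of the transposition `(i j) ∈ S_{2k}` on pair partitions of `{1, …, 2k}`
(defined to do nothing if `i` or `j` lies outside `{1, …, 2k}`). -/
def swapAct {k : ℕ} (i j : ℕ) (m : PairPartition k) : PairPartition k :=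
  if h : 1 ≤ i ∧ i ≤ 2 * k ∧ 1 ≤ j ∧ j ≤ 2 * k then
    { f := fun a => Equiv.swap i j (m.f (Equiv.swap i j a))
      invol := by intro a; simp [m.invol]
      moves := by
        obtain ⟨hi1, hi2, hj1, hj2⟩ := h
        intro a
        have key : ∀ x y : ℕ, Equiv.swap i j x ≠ y ↔ x ≠ Equiv.swap i j y := by
          intro x y
          constructor
          · intro hxy hc; apply hxy; rw [hc]; simp
          · intro hxy hc; apply hxy; rw [← hc]; simp
        rw [key, ← Equiv.swap_apply_self i j a, Equiv.swap_apply_self i j a]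
        rw [m.moves (Equiv.swap i j a)]
        rcases eq_or_ne a i with rfl | hai
        · rw [Equiv.swap_apply_left]; omega
        rcases eq_or_ne a j with rfl | haj
        · rw [Equiv.swap_apply_right]; omega
        · rw [Equiv.swap_apply_of_ne_of_ne hai haj] }
  else m

/-- Removing the pair `{2k-1, 2k}` from a pair partition: the operation `𝔪 ↦ 𝔪↓`
(defined to return the trivial pair partition if `{2k-1, 2k} ∉ 𝔪`). -/
def down {k : ℕ} (m : PairPartition k) : PairPartition (k - 1) :=
  if h : m.f (2 * k - 1) = 2 * k then
    { f := fun a => if a = 2 * k - 1 ∨ a = 2 * k then a else m.f a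
      invol := by
        intro a
        by_cases ha : a = 2 * k - 1 ∨ a = 2 * k
        · simp [ha]
        · have h2k : m.f (2 * k) = 2 * k - 1 := by
            conv_lhs => rw [← h]
            exact m.invol _
          have hne1 : m.f a ≠ 2 * k - 1 := by
            intro hfa
            have h1 : m.f (m.f a) = m.f (2 * k - 1) := by rw [hfa]
            rw [m.invol, h] at h1
            exact ha (Or.inr h1)
          have hne2 : m.f a ≠ 2 * k := by
            intro hfa
            have h1 : m.f (m.f a) = m.f (2 * k) := by rw [hfa]
            rw [m.invol, h2k] at h1
            exact ha (Or.inl h1)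
          simp only [if_neg ha, if_neg (not_or.mpr ⟨hne1, hne2⟩), m.invol]
      moves := by
        intro a
        by_cases ha : a = 2 * k - 1 ∨ a = 2 * k
        · simp only [if_pos ha]
          rcases ha with ha | ha <;> subst ha <;> constructor <;> intro h' <;> first
            | exact absurd rfl h'
            | omega
        · push_neg at ha
          obtain ⟨ha1, ha2⟩ := ha
          simp only [if_neg (not_or.mpr ⟨ha1, ha2⟩)]
          rw [m.moves a]
          omega }
  else triv (k - 1)

/-- A pair partition as a permutation (involution) of `ℕ`. -/
def perm {k : ℕ} (m : PairPartition k) : Equiv.Perm ℕ :=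
  Function.Involutive.toPerm m.f m.invol

end PairPartition

namespace PairPartition

/-- The connected component (cycle) of the multigraph `Γ(𝔪)` containing a vertex `v`:
the orbit of `v` under the group generated by the involutions `𝔢_k` and `𝔪`. -/
def gammaOrbit {k : ℕ} (m : PairPartition k) (v : ℕ) : Set ℕ :=
  MulAction.orbit (Subgroup.closure {(triv k).perm, m.perm} : Subgroup (Equiv.Perm ℕ)) v

/-- The charge function of `Γ(𝔪)`: `charge m v` holds iff `v` receives charge `+`,
i.e. iff `v` is at even distance (in `Γ(𝔪)`) from the largest label of its cycle.
The vertices at even distance from the largest label `M` of a cycle are exactly the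
orbit of `M` under the cyclic group generated by `𝔪 ∘ 𝔢_k`. -/
def charge {k : ℕ} (m : PairPartition k) (v : ℕ) : Prop :=
  v ∈ MulAction.orbit (Subgroup.zpowers (m.perm * (triv k).perm) : Subgroup (Equiv.Perm ℕ))
        (sSup (gammaOrbit m v))

/-- The weight `ω^(b)(𝔪, (i j)·𝔪)` attached to the transposition `(i j)` acting on `𝔪`:
it is `1` if the charges of `i` and `j` in `Γ(𝔪)` agree, and `b` otherwise. -/
noncomputable def omegab {R : Type*} [CommRing R] (b : R) {k : ℕ}
    (m : PairPartition k) (i j : ℕ) : R :=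
  if (charge m i ↔ charge m j) then 1 else b

/-- The number of cycles of `Γ(𝔪)` of length `2ℓ`, i.e. the multiplicity of `ℓ`
in the coset-type `λ(𝔪)` of `𝔪`. -/
noncomputable def cycleCount {k : ℕ} (m : PairPartition k) (ℓ : ℕ) : ℕ :=
  (((Finset.Icc 1 (2 * k)).filter fun a => (gammaOrbit m a).ncard = 2 * ℓ).card) / (2 * ℓ)

/-- Two pair partitions have the same coset-type iff `Γ(𝔪)` and `Γ(𝔪')` have the same
number of cycles of every length. -/
def SameCosetType {k : ℕ} (m m' : PairPartition k) : Prop :=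
  ∀ ℓ : ℕ, cycleCount m ℓ = cycleCount m' ℓ

/-- The pair partition `𝔪` has coset-type the multiset `μ` (a partition of `k`,
presented as the multiset of its parts). -/
def HasCosetType {k : ℕ} (m : PairPartition k) (μ : Multiset ℕ) : Prop :=
  ∀ ℓ : ℕ, 1 ≤ ℓ → μ.count ℓ = cycleCount m ℓ

/-- All lists of length `n` with entries in the finset `S`. -/
def listsLen (S : Finset (ℕ × ℕ)) : ℕ → Finset (List (ℕ × ℕ))
  | 0 => {[]}
  | n + 1 => (S ×ˢ listsLen S n).image fun p => p.1 :: p.2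

/-- Apply a sequence `τ = (τ_1, …, τ_r)` of transpositions (each encoded as a pair)
to a pair partition, the rightmost transposition acting first:
`τ_1 ∘ τ_2 ∘ ⋯ ∘ τ_r · 𝔪`. -/
def applyFacts {k : ℕ} (l : List (ℕ × ℕ)) (m : PairPartition k) : PairPartition k :=
  l.foldr (fun t acc => swapAct t.1 t.2 acc) m

/-- `l` is a monotone factorisation of the pair partition `𝔪 ∈ 𝒫_k`: a sequence of
transpositions `(a_s b_s)` with `a_s < b_s`, all `b_s` odd, `b_1 ≤ b_2 ≤ ⋯ ≤ b_r`,
and `τ_1 ∘ ⋯ ∘ τ_r · 𝔪 = 𝔢_k`. -/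
def IsMonoFact {k : ℕ} (m : PairPartition k) (l : List (ℕ × ℕ)) : Prop :=
  (∀ t ∈ l, 1 ≤ t.1 ∧ t.1 < t.2 ∧ t.2 ≤ 2 * k ∧ Odd t.2) ∧
  List.Pairwise (· ≤ ·) (l.map Prod.snd) ∧
  applyFacts l m = triv k

/-- The hive number of a monotone factorisation: the number of distinct values among
`b_1, …, b_r`. -/
def hive (l : List (ℕ × ℕ)) : ℕ := (l.map Prod.snd).toFinset.card

/-- The flip number of a monotone factorisation `τ` of `𝔪`: the number of indices `s`
with `ω^(b)(𝔪^(s), τ_s · 𝔪^(s)) = b`, where `𝔪^(s) = τ_{s+1} ∘ ⋯ ∘ τ_r · 𝔪`. -/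
noncomputable def flip {k : ℕ} (m : PairPartition k) : List (ℕ × ℕ) → ℕ
  | [] => 0
  | t :: rest =>
      (if (charge (applyFacts rest m) t.1 ↔ charge (applyFacts rest m) t.2) then 0 else 1)
        + flip m rest

/-- The finset of monotone factorisations of `𝔪 ∈ 𝒫_k` of length `r`. -/
noncomputable def monoFinset {k : ℕ} (m : PairPartition k) (r : ℕ) : Finset (List (ℕ × ℕ)) :=
  (listsLen ((Finset.Icc 1 (2 * k)) ×ˢ (Finset.Icc 1 (2 * k))) r).filter fun l => IsMonoFact m l

/-- A sequence of transpositions is connected (relative to level `k`) if together with the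
involution `ι = (1 2)(3 4)⋯(2k-1 2k)` it generates a subgroup acting transitively on
`{1, …, 2k}`. -/
def IsConnectedFact (k : ℕ) (l : List (ℕ × ℕ)) : Prop :=
  ∀ a ∈ Finset.Icc 1 (2 * k), ∀ b ∈ Finset.Icc 1 (2 * k),
    ∃ σ ∈ Subgroup.closure
        ({(triv k).perm} ∪ {p : Equiv.Perm ℕ | ∃ t ∈ l, p = Equiv.swap t.1 t.2}),
      σ a = b

end PairPartition


noncomputable instance matrixMeasurableSpace {N : ℕ} :
    MeasurableSpace (Matrix (Fin N) (Fin N) ℝ) :=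
  inferInstanceAs (MeasurableSpace (Fin N → Fin N → ℝ))

/-- The compact group `O(N)` of real orthogonal `N × N` matrices. -/
abbrev OrthGroup (N : ℕ) := Matrix.orthogonalGroup (Fin N) ℝ

noncomputable instance orthMeasurableSpace {N : ℕ} : MeasurableSpace (OrthGroup N) :=
  borel _

/-- The diagonal matrix `I_{M,N}` whose first `M` diagonal entries are `1` and whose
remaining entries are `0`. -/
def IMN (N M : ℕ) : Matrix (Fin N) (Fin N) ℝ :=
  Matrix.diagonal fun p => if (p : ℕ) < M then (1 : ℝ) else 0

/-- The map `O ↦ O · I_{M,N} · Oᵀ` from `O(N)` onto the space `A(M,N)` of idempotent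
real symmetric `N × N` matrices of rank `M`. -/
def grassMap (N M : ℕ) (O : OrthGroup N) : Matrix (Fin N) (Fin N) ℝ :=
  (O : Matrix (Fin N) (Fin N) ℝ) * IMN N M * Matrix.transpose (O : Matrix (Fin N) (Fin N) ℝ)


/-- The product `A_{i(1)i(2)} A_{i(3)i(4)} ⋯ A_{i(2k-1)i(2k)}` of matrix entries. -/
def prodEntries {N : ℕ} (k : ℕ) (i : ℕ → Fin N) (A : Matrix (Fin N) (Fin N) ℝ) : ℝ :=
  ∏ a ∈ Finset.range k, A (i (2 * a + 1)) (i (2 * a + 2))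



open PairPartition


/-- A step in the (`b`- or `bt`-) Weingarten graph: a type-A edge `𝔪 → (i 2k-1)·𝔪`,
a type-B edge `𝔪 → 𝔪↓`, or a type-C edge `𝔪 → ((i 2k-1)·𝔪)↓`. -/
inductive WStep where
  | A (i : ℕ) : WStep
  | B : WStep
  | C (i : ℕ) : WStep
deriving DecidableEq

/-- `IsPathTo k 𝔪 ρ` holds iff `ρ` is a path in the `bt`-Weingarten graph from the
pair partition `𝔪 ∈ 𝒫_k` to the empty pair partition. -/
def IsPathTo : (k : ℕ) → PairPartition k → List WStep → Prop
  | 0, _, [] => True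
  | _ + 1, _, [] => False
  | 0, _, _ :: _ => False
  | k + 1, m, WStep.A i :: ρ =>
      1 ≤ i ∧ i ≤ 2 * (k + 1) - 2 ∧ IsPathTo (k + 1) (swapAct i (2 * (k + 1) - 1) m) ρ
  | k + 1, m, WStep.B :: ρ =>
      m.f (2 * (k + 1) - 1) = 2 * (k + 1) ∧ IsPathTo k (down m) ρ
  | k + 1, m, WStep.C i :: ρ =>
      1 ≤ i ∧ i ≤ 2 * (k + 1) - 2 ∧ m.f i = 2 * (k + 1) ∧
        IsPathTo k (down (swapAct i (2 * (k + 1) - 1) m)) ρ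

/-- The product of the `b`-dependent edge weights along a path. -/
noncomputable def pathWeight {R : Type*} [CommRing R] (b : R) :
    (k : ℕ) → PairPartition k → List WStep → R
  | _, _, [] => 1
  | 0, _, _ :: _ => 1
  | k + 1, m, WStep.A i :: ρ =>
      omegab b m i (2 * (k + 1) - 1) * pathWeight b (k + 1) (swapAct i (2 * (k + 1) - 1) m) ρ
  | k + 1, m, WStep.B :: ρ => pathWeight b k (down m) ρ
  | k + 1, m, WStep.C i :: ρ => pathWeight b k (down (swapAct i (2 * (k + 1) - 1) m)) ρ

/-- The number of type-A edges of a path. -/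
def countA (l : List WStep) : ℕ :=
  (l.filter fun s => match s with | WStep.A _ => true | _ => false).length

/-- The number of type-B edges of a path. -/
def countB (l : List WStep) : ℕ :=
  (l.filter fun s => match s with | WStep.B => true | _ => false).length

/-- The number of type-C edges of a path. -/
def countC (l : List WStep) : ℕ :=
  (l.filter fun s => match s with | WStep.C _ => true | _ => false).length

/-- The `b`-Weingarten function `Wg^(b)(𝔪) ∈ ℤ[b]⟦X⟧`: the coefficient of `X^n` is the
sum of `(-1)^{ℓ_A(ρ)} w(ρ)` over all paths `ρ` (with no type-C edges, i.e. paths in the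
`b`-Weingarten graph) from `𝔪` to the empty pair partition with `ℓ_A(ρ) + ℓ_B(ρ) = n`.
Here `b` is the polynomial variable of `ℤ[b]`. -/
noncomputable def WgB (k : ℕ) (m : PairPartition k) : PowerSeries (Polynomial ℤ) :=
  PowerSeries.mk fun n =>
    ∑ᶠ (ρ : List WStep)
      (_ : IsPathTo k m ρ ∧ (∀ i, WStep.C i ∉ ρ) ∧ countA ρ + countB ρ = n),
      (-1 : Polynomial ℤ) ^ countA ρ * pathWeight (Polynomial.X : Polynomial ℤ) k m ρ

/-- The `bt`-Weingarten function `Wg^(bt)(𝔪) ∈ (ℤ[b,y])⟦X⟧`: the coefficient of `X^n` is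
the sum of `(-1)^{ℓ_A(ρ)} y^{ℓ_B(ρ)} w(ρ)` over all paths `ρ` in the `bt`-Weingarten graph
from `𝔪` to the empty pair partition with `ℓ_A(ρ) + ℓ_C(ρ) = n`.  Here `b = X 0` and
`y = X 1` in `ℤ[b,y] = MvPolynomial (Fin 2) ℤ`. -/
noncomputable def WgBT (k : ℕ) (m : PairPartition k) :
    PowerSeries (MvPolynomial (Fin 2) ℤ) :=
  PowerSeries.mk fun n =>
    ∑ᶠ (ρ : List WStep) (_ : IsPathTo k m ρ ∧ countA ρ + countC ρ = n),
      (-1 : MvPolynomial (Fin 2) ℤ) ^ countA ρ * (MvPolynomial.X 1) ^ countB ρ *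
        pathWeight (MvPolynomial.X 0 : MvPolynomial (Fin 2) ℤ) k m ρ

/-- The standard basis vector `𝔪` of the free module with basis `𝒫_k`,
realised as functions `𝒫_k → R`. -/
noncomputable def basisVec {R : Type*} [CommRing R] (k : ℕ) (m : PairPartition k) :
    PairPartition k → R :=
  fun n => if n = m then 1 else 0

/-- The `b`-deformed Jucys–Murphy operator `𝒥_i` acting on the free module with basis
`𝒫_k` (realised as functions `𝒫_k → R`): on basis vectors,
`𝒥_i(𝔪) = ∑_{a=1}^{2i-2} ω^(b)((a 2i-1)·𝔪, 𝔪) · (a 2i-1)·𝔪`. -/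
noncomputable def JbOp {R : Type*} [CommRing R] (b : R) {k : ℕ} (i : ℕ)
    (v : PairPartition k → R) : PairPartition k → R :=
  fun n => ∑ a ∈ Finset.Icc 1 (2 * i - 2),
    omegab b n a (2 * i - 1) * v (swapAct a (2 * i - 1) n)

/-- The (odd) Jucys–Murphy element `J_{2i-1} = ∑_{a=1}^{2i-2} (a
 2i-1)` of the group
algebra of `S_{2k}`, acting on the free module with basis `𝒫_k` via the linear extension
of the `S_{2k}`-action on pair partitions. -/
noncomputable def JoddOp {R : Type*} [CommRing R] {k : ℕ} (i : ℕ)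
    (v : PairPartition k → R) : PairPartition k → R :=
  fun n => ∑ a ∈ Finset.Icc 1 (2 * i - 2), v (swapAct a (2 * i - 1) n)

/-- The vector `𝔭_μ = ∑_{𝔪 : λ(𝔪) = μ} 𝔪`, i.e. the indicator function of the set of
pair partitions of coset-type `μ`. -/
noncomputable def pVec {R : Type*} [CommRing R] (k : ℕ) (μ : Multiset ℕ) :
    PairPartition k → R :=
  fun m => if HasCosetType m μ then 1 else 0

noncomputable def applyPows {R : Type*} [CommRing R] (b : R) {k : ℕ} :
    List (ℕ × ℕ) → (PairPartition k → R) → (PairPartition k → R)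
  | [], v => v
  | ia :: rest, v => (JbOp b ia.1)^[ia.2] (applyPows b rest v)


/-- The coefficient ring `ℤ[b,y]⟦X⟧`, with `b = X 0` and `y = X 1`. -/
abbrev SeriesRing := PowerSeries (MvPolynomial (Fin 2) ℤ)

noncomputable def bS : SeriesRing := PowerSeries.C (MvPolynomial.X 0)
noncomputable def yS : SeriesRing := PowerSeries.C (MvPolynomial.X 1)

/-- The operator-valued power series `(1 + X·𝒥_i)⁻¹ = ∑_{j ≥ 0} (-X)^j 𝒥_i^j`
applied to a vector `v`, computed coefficientwise. -/
noncomputable def invApply (k : ℕ) (i : ℕ) (v : PairPartition k → SeriesRing) :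
    PairPartition k → SeriesRing :=
  fun n => PowerSeries.mk fun d =>
    ∑ᶠ j : ℕ, PowerSeries.coeff d
      ((-(PowerSeries.X : SeriesRing)) ^ j * ((JbOp bS i)^[j] v) n)

/-- The vector `(y + X𝒥_j)(1 + X𝒥_j)⁻¹ ⋯ (y + X𝒥_1)(1 + X𝒥_1)⁻¹ (𝔢_k)`. -/
noncomputable def prodVec (k : ℕ) : ℕ → (PairPartition k → SeriesRing)
  | 0 => fun n => if n = triv k then 1 else 0
  | j + 1 => fun n =>
      yS * invApply k (j + 1) (prodVec k j) n +
        PowerSeries.X * (JbOp bS (j + 1) (invApply k (j + 1) (prodVec k j))) n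


open MvPolynomial

/-- The formal partial derivative `∂_n = ∂/∂p_n` on the polynomial ring
`K[p_1, p_2, …]` (the variables being indexed by positive naturals);
junk value `0` for `n = 0`. -/
noncomputable def pd (K : Type*) [CommRing K] (n : ℕ) :
    MvPolynomial ℕ+ K →ₗ[K] MvPolynomial ℕ+ K :=
  if h : 0 < n then (pderiv (⟨n, h⟩ : ℕ+)).toLinearMap else 0

/-- The variable `p_n` of `K[p_1, p_2, …]`; junk value `0` for `n = 0`. -/
noncomputable def pvar (K : Type*) [CommRing K] (n : ℕ) : MvPolynomial ℕ+ K :=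
  if h : 0 < n then X ⟨n, h⟩ else 0

section SumOp

variable (K : Type*) [CommRing K]

lemma sumOp_support_subset (m : ℕ) (f : MvPolynomial ℕ+ K) :
    (Function.support fun i => ((i + m : ℕ) : K) • (pvar K i * pd K (i + m) f)) ⊆
      ((fun i => i + m) ⁻¹' ↑(f.vars.image (fun v : ℕ+ => (v : ℕ)))) := by
  intro i hi
  simp only [Function.mem_support] at hi
  by_contra hmem
  apply hi
  rcases Nat.eq_zero_or_pos (i + m) with h0 | h0
  · have hi0 : i = 0 := by omega
    subst hi0
    simp [pvar]
  · have hnot : (⟨i + m, h0⟩ : ℕ+) ∉ f.vars := by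
      intro hv
      apply hmem
      simp only [Set.mem_preimage, Finset.coe_image, Set.mem_image, Finset.mem_coe]
      exact ⟨⟨i + m, h0⟩, hv, rfl⟩
    have hz : pd K (i + m) f = 0 := by
      have := pderiv_eq_zero_of_notMem_vars (R := K) hnot
      have e : pd K (i + m) = (pderiv (⟨i + m, h0⟩ : ℕ+)).toLinearMap := dif_pos h0
      rw [e]
      exact this
    rw [hz, mul_zero, smul_zero]

lemma sumOp_support_finite (m : ℕ) (f : MvPolynomial ℕ+ K) :
    (Function.support fun i => ((i + m : ℕ) : K) • (pvar K i * pd K (i + m) f)).Finite := by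
  apply Set.Finite.subset _ (sumOp_support_subset K m f)
  apply Set.Finite.preimage
  · exact (add_left_injective m).injOn
  · exact (f.vars.image (fun v : ℕ+ => (v : ℕ))).finite_toSet

/-- The operator `∑_{i ≥ 1} (i+m) p_i ∂_{i+m}` on `K[p_1, p_2, …]`
(a well-defined linear operator, the sum being locally finite on polynomials). -/
noncomputable def sumOp (m : ℕ) : MvPolynomial ℕ+ K →ₗ[K] MvPolynomial ℕ+ K where
  toFun f := ∑ᶠ i : ℕ, ((i + m : ℕ) : K) • (pvar K i * pd K (i + m) f)
  map_add' x y := by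
    have key : ∀ i : ℕ, ((i + m : ℕ) : K) • (pvar K i * pd K (i + m) (x + y)) =
        ((i + m : ℕ) : K) • (pvar K i * pd K (i + m) x) +
          ((i + m : ℕ) : K) • (pvar K i * pd K (i + m) y) := by
      intro i
      rw [map_add, mul_add, smul_add]
    try dsimp only
    rw [finsum_congr key]
    exact finsum_add_distrib (sumOp_support_finite K m x) (sumOp_support_finite K m y)
  map_smul' c x := by
    have key : ∀ i : ℕ, ((i + m : ℕ) : K) • (pvar K i * pd K (i + m) (c • x)) =
        c • (((i + m : ℕ) : K) • (pvar K i * pd K (i + m) x)) := by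
      intro i
      rw [_root_.map_smul, smul_comm]
      congr 1
      rw [mul_smul_comm]
    try dsimp only
    rw [finsum_congr key]
    simp only [RingHom.id_apply]
    exact (smul_finsum' c (sumOp_support_finite K m x)).symm
end SumOp

/-- The `bt`-deformed Virasoro-type operator `L_m` of Theorem 3.5/4.7, acting on the
polynomial ring `K[p_1, p_2, …]`. -/
noncomputable def Lop (K : Type*) [CommRing K] (b t z hbar : K) (m : ℕ) :
    MvPolynomial ℕ+ K →ₗ[K] MvPolynomial ℕ+ K :=
  (((m : K) * Ring.inverse hbar) • pd K m)
    - (1 + b) • (∑ i ∈ Finset.Ioo 0 m,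
        (((i : ℕ) : K) * (((m - i : ℕ)) : K)) • (pd K i ∘ₗ pd K (m - i)))
    - sumOp K m
    - ((b * (m : K) * ((m - 1 : ℕ) : K)) • pd K m)
    - ((z * Ring.inverse hbar * (t - 1) * ((m - 1 : ℕ) : K)) • pd K (m - 1))
    - (if m = 1 then (z * Ring.inverse hbar * Ring.inverse hbar * Ring.inverse (1 + b)) •
        (LinearMap.id : MvPolynomial ℕ+ K →ₗ[K] MvPolynomial ℕ+ K) else 0)
open PairPartition

/-- `i : {1,…,2k} → {1,…,N}` is admissible for `𝔪`: `{a,b} ∈ 𝔪` implies `i a = i b`. -/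
def Admissible {N : ℕ} (k : ℕ) (m : PairPartition k) (i : ℕ → Fin N) : Prop :=
  ∀ a, 1 ≤ a → a ≤ 2 * k → i (m.f a) = i a

/-- `i : {1,…,2k} → {1,…,N}` is strongly admissible for `𝔪`:
for `a, b ∈ {1,…,2k}`, `i a = i b` holds iff `a = b` or `{a,b} ∈ 𝔪`. -/
def StronglyAdmissible {N : ℕ} (k : ℕ) (m : PairPartition k) (i : ℕ → Fin N) : Prop :=
  ∀ a b, 1 ≤ a → a ≤ 2 * k → 1 ≤ b → b ≤ 2 * k → (i a = i b ↔ (a = b ∨ m.f a = b))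

/-- `ĥ^{(t)}_r(𝔪)` evaluated at a real number `t`: the weighted count
`∑_{τ ∈ Mono(𝔪), ℓ(τ) = r} t^{hive(τ)}`. -/
noncomputable def hiveSum {k : ℕ} (m : PairPartition k) (r : ℕ) (t : ℝ) : ℝ :=
  ∑ l ∈ monoFinset m r, t ^ hive l

/-- The `bt`-monotone count `∑_{τ ∈ Mono(𝔪), ℓ(τ) = r} b^{flip(τ)} t^{hive(τ)}`
in `ℤ[b,t]`, with `b = X 0` and `t = X 1`. -/
noncomputable def btSum {k : ℕ} (m : PairPartition k) (r : ℕ) : MvPolynomial (Fin 2) ℤ :=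
  ∑ l ∈ monoFinset m r,
    (MvPolynomial.X 0 : MvPolynomial (Fin 2) ℤ) ^ (flip m l) *
      (MvPolynomial.X 1) ^ (hive l)

/-- The connected `bt`-monotone count
`∑_{τ ∈ CMono(𝔪), ℓ(τ) = r} b^{flip(τ)} t^{hive(τ)}` in `ℚ[b,t]`,
with `b = X 0` and `t = X 1`. -/
noncomputable def cMonoSum {k : ℕ} (m : PairPartition k) (r : ℕ) : MvPolynomial (Fin 2) ℚ :=
  ∑ l ∈ (monoFinset m r).filter (fun l => IsConnectedFact k l),
    (MvPolynomial.X 0 : MvPolynomial (Fin 2) ℚ) ^ (flip m l) *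
      (MvPolynomial.X 1) ^ (hive l)

/-- The operator `c + J_{2i-1}` on the free module with basis `𝒫_k`. -/
noncomputable def affJoddOp {k : ℕ} (c : ℝ) (i : ℕ) (v : PairPartition k → ℝ) :
    PairPartition k → ℝ :=
  fun n => c * v n + JoddOp i v n

/-!
Equal coset-types make `Γ(𝔪)` and `Γ(𝔪')` isomorphic as edge-coloured graphs: there is a
bijection `π` of `{1, …, 2k}` commuting with `𝔢_k` and carrying `𝔪` to `𝔪'`.  To build it, the
cycle of `Γ(𝔪)` through a vertex `r` is parametrised by `(s, b) ↦ ρ^s (𝔢_k^b r)` with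
`ρ = 𝔪 𝔢_k`; two parameters give the same vertex iff the `b` agree and the `s` agree modulo half
the length of the cycle, so cycles of equal length can be matched parameter by parameter.

Then `i' ∘ π` and `i` have the same level sets on `{1, …, 2k}`, so `i' ∘ π = σ ∘ i` for a
permutation `σ` of the indices.  Conjugating by the permutation matrix of `σ` preserves the
pushforward of the Haar measure, and on the symmetric matrices `O I_{M,N} Oᵀ` the product of
entries indexed by `i' ∘ π` equals the one indexed by `i'`, because `π` only permutes and flips
the pairs `{2a-1, 2a}`.
-/

open Function Set MulAction
open scoped Finset Pointwise Matrix

theorem Function.exists_injOn_range_comp_eq {P α β : Type*} [Nonempty β] {f : P → α}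
    {g : P → β} (h : ∀ p q, f p = f q ↔ g p = g q) :
    ∃ τ : α → β, InjOn τ (range f) ∧ τ ∘ f = g := by
  obtain ⟨τ, rfl⟩ := (factorsThrough_iff (f := f) g).1 fun p q hpq => (h p q).1 hpq
  refine ⟨τ, ?_, rfl⟩
  rintro _ ⟨p, rfl⟩ _ ⟨q, rfl⟩ hpq
  exact (h p q).2 hpq

theorem Set.ncard_range_eq_of_ker_eq {P α β : Type*} {f : P → α} {g : P → β}
    (h : ∀ p q, f p = f q ↔ g p = g q) : (range f).ncard = (range g).ncard := by
  cases isEmpty_or_nonempty P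
  · simp [range_eq_empty]
  have : Nonempty β := .map g ‹_›
  obtain ⟨τ, hτ, rfl⟩ := exists_injOn_range_comp_eq h
  rw [range_comp, hτ.ncard_image]

theorem Equiv.Perm.exists_apply_eq_of_ker_eq {P β : Type*} [Fintype β] {f g : P → β}
    (h : ∀ p q, f p = f q ↔ g p = g q) : ∃ σ : Perm β, ∀ p, σ (f p) = g p := by
  cases isEmpty_or_nonempty P
  · exact ⟨1, isEmptyElim⟩
  have : Nonempty β := .map g ‹_›
  obtain ⟨τ, hτ, rfl⟩ := exists_injOn_range_comp_eq h
  obtain ⟨σ, hσ⟩ := MapsTo.exists_equiv_extend_of_card_eq (t := Finset.univ) (by simp)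
    (by simp [MapsTo]) hτ
  exact ⟨σ.trans (Equiv.subtypeUnivEquiv Finset.mem_univ), fun p => hσ _ (mem_range_self p)⟩

theorem Finset.exists_equiv_apply_eq_of_card_filter_eq {α β γ : Type*} [DecidableEq γ]
    {A : Finset α} {B : Finset β} {f : α → γ} {g : β → γ}
    (h : ∀ c, #{a ∈ A | f a = c} = #{b ∈ B | g b = c}) :
    ∃ e : A ≃ B, ∀ a, g (e a) = f a := by
  have hfiber (c : γ) : Fintype.card {a : A // f a = c} = Fintype.card {b : B // g b = c} := by
    simpa [Fintype.card_subtype, filter_attach (fun a => f a = c),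
      filter_attach (fun b => g b = c)] using h c
  exact ⟨.ofFiberEquiv fun c => Fintype.equivOfCardEq (hfiber c),
    Equiv.ofFiberEquiv_map (g := fun b : B => g b) _⟩

namespace MulAction

variable (G : Type*) {α : Type*} [Group G] [MulAction G α]

noncomputable def orbitRep (x : α) : α := (Quotient.mk (orbitRel G α) x).out

variable {G}

theorem orbitRep_mem_orbit (x : α) : orbitRep G x ∈ orbit G x :=
  Quotient.mk_out (s := orbitRel G α) x

theorem orbitRep_eq_orbitRep_iff {x y : α} : orbitRep G x = orbitRep G y ↔ x ∈ orbit G y :=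
  Quotient.out_inj.trans Quotient.eq

theorem orbit_orbitRep (x : α) : orbit G (orbitRep G x) = orbit G x :=
  orbit_eq_iff.2 (orbitRep_mem_orbit x)

theorem orbitRep_eq_of_mem_image {S : Finset α} {r : α} (hr : r ∈ S.image (orbitRep G)) :
    orbitRep G r = r := by
  obtain ⟨x, -, rfl⟩ := Finset.mem_image.1 hr
  exact orbitRep_eq_orbitRep_iff.2 (orbitRep_mem_orbit x)

theorem card_filter_ncard_orbit_eq {S : Finset α} (hS : ∀ x ∈ S, orbit G x ⊆ S) (n : ℕ) :
    #{x ∈ S | (orbit G x).ncard = n} =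
      n * #{r ∈ S.image (orbitRep G) | (orbit G r).ncard = n} := by
  have hmaps : MapsTo (orbitRep G) (({x ∈ S | (orbit G x).ncard = n} : Finset α) : Set α)
      (({r ∈ S.image (orbitRep G) | (orbit G r).ncard = n} : Finset α) : Set α) := by
    intro x hx
    simp only [Finset.coe_filter, mem_ofPred_eq] at hx ⊢
    exact ⟨Finset.mem_image_of_mem _ hx.1, by rw [orbit_orbitRep, hx.2]⟩
  have hfiber : ∀ r ∈ {r ∈ S.image (orbitRep G) | (orbit G r).ncard = n},
      #{x ∈ {x ∈ S | (orbit G x).ncard = n} | orbitRep G x = r} = n := by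
    simp only [Finset.mem_filter, Finset.mem_image]
    rintro _ ⟨⟨y, hy, rfl⟩, hn⟩
    rw [orbit_orbitRep] at hn
    rw [← hn, ← Set.ncard_coe_finset]
    congr 1
    ext x
    simp only [Finset.coe_filter, Finset.mem_filter, mem_ofPred_eq, orbitRep_eq_orbitRep_iff]
    refine ⟨fun ⟨_, hxy⟩ => hxy, fun hxy => ⟨⟨hS y hy hxy, ?_⟩, hxy⟩⟩
    rw [orbit_eq_iff.2 hxy]
  rw [Finset.card_eq_sum_card_fiberwise hmaps, Finset.sum_const_nat hfiber, mul_comm]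

end MulAction

namespace Equiv.Perm

variable {α : Type*} {e m : Perm α}

theorem zpow_apply_eq_zpow_apply_iff (g : Perm α) (s t : ℤ) (x y : α) :
    (g ^ s) x = (g ^ t) y ↔ (g ^ (s - t)) x = y := by
  rw [sub_eq_neg_add, zpow_add, zpow_neg, mul_apply, inv_eq_iff_eq]

theorem zpow_apply_eq_zpow_apply_iff_period_dvd (g : Perm α) (s t : ℤ) (x : α) :
    (g ^ s) x = (g ^ t) x ↔ (period g x : ℤ) ∣ s - t := by
  rw [zpow_apply_eq_zpow_apply_iff, ← zpow_smul_eq_iff_period_dvd, Perm.smul_def]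

theorem inv_eq_self_of_involutive (he : Involutive e) : e⁻¹ = e :=
  Involutive.symm_eq_self_of_involutive e he

theorem mul_zpow_of_involutive (he : Involutive e) (hm : Involutive m) (s : ℤ) :
    e * (m * e) ^ s = (m * e) ^ (-s) * e := by
  have hconj : e * (m * e) * e⁻¹ = (m * e)⁻¹ := by
    rw [mul_inv_rev, inv_eq_self_of_involutive he, inv_eq_self_of_involutive hm, mul_assoc,
      mul_assoc, (ext he : e * e = 1), mul_one]
  calc e * (m * e) ^ s = e * (m * e) ^ s * e⁻¹ * e := by group
    _ = (m * e) ^ (-s) * e := by rw [← conj_zpow, hconj, inv_zpow']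

def cyclePoint (e m : Perm α) (x : α) (s : ℤ) (b : Bool) : α :=
  ((m * e) ^ s) (cond b (e x) x)

theorem cyclePoint_mem_orbit (e m : Perm α) (x : α) (s : ℤ) (b : Bool) :
    cyclePoint e m x s b ∈ orbit (Subgroup.closure {e, m}) x := by
  have he : e ∈ Subgroup.closure {e, m} := Subgroup.subset_closure (by simp)
  have hρ : m * e ∈ Subgroup.closure {e, m} := mul_mem (Subgroup.subset_closure (by simp)) he
  cases b
  · exact ⟨⟨_, zpow_mem hρ s⟩, rfl⟩
  · exact ⟨⟨_, mul_mem (zpow_mem hρ s) he⟩, rfl⟩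

theorem apply_cyclePoint_left (he : Involutive e) (hm : Involutive m) (x : α) (s : ℤ)
    (b : Bool) : e (cyclePoint e m x s b) = cyclePoint e m x (-s) (!b) := by
  rw [cyclePoint, ← mul_apply, mul_zpow_of_involutive he hm, mul_apply]
  cases b <;> simp [cyclePoint, he x]

theorem apply_cyclePoint_right (he : Involutive e) (hm : Involutive m) (x : α) (s : ℤ)
    (b : Bool) : m (cyclePoint e m x s b) = cyclePoint e m x (1 - s) (!b) := by
  rw [← he (cyclePoint e m x s b), ← mul_apply, apply_cyclePoint_left he hm, cyclePoint,
    cyclePoint, ← mul_apply, ← zpow_one_add, ← sub_eq_add_neg]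

theorem mem_orbit_closure_iff (he : Involutive e) (hm : Involutive m) {x y : α} :
    y ∈ orbit (Subgroup.closure {e, m}) x ↔ ∃ s b, cyclePoint e m x s b = y := by
  refine ⟨?_, fun ⟨s, b, h⟩ => h ▸ cyclePoint_mem_orbit e m x s b⟩
  rintro ⟨⟨g, hg⟩, rfl⟩
  suffices ∀ s b, ∃ t c, g (cyclePoint e m x s b) = cyclePoint e m x t c by
    obtain ⟨t, c, h⟩ := this 0 false
    exact ⟨t, c, by simpa [cyclePoint] using h.symm⟩
  have hgen : ∀ g ∈ ({e, m} : Set (Perm α)), ∀ s b, ∃ t c,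
      g (cyclePoint e m x s b) = cyclePoint e m x t c := by
    rintro g (rfl | rfl) s b
    exacts [⟨_, _, apply_cyclePoint_left he hm x s b⟩, ⟨_, _, apply_cyclePoint_right he hm x s b⟩]
  induction hg using Subgroup.closure_induction'' with
  | mem g hg => exact hgen g hg
  | inv_mem g hg =>
    rcases hg with rfl | rfl
    · rw [inv_eq_self_of_involutive he]; exact hgen _ (by simp)
    · rw [inv_eq_self_of_involutive hm]; exact hgen _ (by simp)
  | one => exact fun s b => ⟨s, b, rfl⟩
  | mul g h _ _ hg hh =>
    intro s b
    obtain ⟨t, c, htc⟩ := hh s b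
    obtain ⟨u, d, hud⟩ := hg t c
    exact ⟨u, d, by rw [mul_apply, htc, hud]⟩

theorem exists_cyclePoint_orbitRep_eq (he : Involutive e) (hm : Involutive m) (x : α) :
    ∃ s b, cyclePoint e m (orbitRep (Subgroup.closure {e, m}) x) s b = x :=
  (mem_orbit_closure_iff he hm).1 ((orbit_orbitRep (G := Subgroup.closure {e, m}) x).symm ▸
    mem_orbit_self x)

structure IsPairingOn (e : Perm α) (S : Set α) : Prop where
  involutive : Involutive e
  apply_ne_iff : ∀ x, e x ≠ x ↔ x ∈ S

namespace IsPairingOn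

variable {S : Set α}

theorem apply_mem_iff (he : IsPairingOn e S) {x : α} : e x ∈ S ↔ x ∈ S := by
  rw [← he.apply_ne_iff, ← he.apply_ne_iff, he.involutive x, ne_comm]

theorem mem_stabilizer (he : IsPairingOn e S) : e ∈ stabilizer (Perm α) S := by
  ext x
  rw [Set.mem_smul_set_iff_inv_smul_mem, inv_eq_self_of_involutive he.involutive, Perm.smul_def,
    he.apply_mem_iff]

theorem orbit_subset (he : IsPairingOn e S) (hm : IsPairingOn m S) {x : α} (hx : x ∈ S) :
    orbit (Subgroup.closure {e, m}) x ⊆ S := by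
  rintro _ ⟨⟨g, hg⟩, rfl⟩
  have hgS : g • S = S := Subgroup.closure_le _ |>.2
    (Set.insert_subset he.mem_stabilizer (Set.singleton_subset_iff.2 hm.mem_stabilizer)) hg
  exact hgS ▸ Set.smul_mem_smul_set hx

theorem zpow_apply_ne_zpow_apply (he : IsPairingOn e S) (hm : IsPairingOn m S) {x : α}
    (hx : x ∈ S) (s t : ℤ) : ((m * e) ^ s) x ≠ ((m * e) ^ t) (e x) := by
  rw [Ne, zpow_apply_eq_zpow_apply_iff]
  intro hst
  -- Halfway along the walk from `x` to `e x`, either `e` or `m` would have a fixed point in `S`.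
  obtain ⟨q, hq⟩ := Int.even_or_odd' (s - t)
  have hy : ((m * e) ^ q) x ∈ S := he.orbit_subset hm hx (cyclePoint_mem_orbit e m x q false)
  have hey : e (((m * e) ^ q) x) = ((m * e) ^ (s - t - q)) x := by
    rw [← mul_apply, mul_zpow_of_involutive he.involutive hm.involutive, mul_apply, ← hst,
      ← mul_apply, ← zpow_add, neg_add_eq_sub]
  rcases hq with hq | hq
  · exact (he.apply_ne_iff _).2 hy (by rw [hey, hq]; congr 2; ring)
  · refine (hm.apply_ne_iff _).2 (he.apply_mem_iff.2 hy) (Eq.symm ?_)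
    calc e (((m * e) ^ q) x) = ((m * e) ^ (1 + q)) x := by rw [hey, hq]; congr 2; ring
      _ = m (e (((m * e) ^ q) x)) := by rw [zpow_add, zpow_one, mul_apply, mul_apply]

theorem cyclePoint_eq_cyclePoint_iff (he : IsPairingOn e S) (hm : IsPairingOn m S) {x : α}
    (hx : x ∈ S) {s t : ℤ} {b c : Bool} :
    cyclePoint e m x s b = cyclePoint e m x t c ↔ b = c ∧ (period (m * e) x : ℤ) ∣ s - t := by
  cases b <;> cases c
  · simp [cyclePoint, zpow_apply_eq_zpow_apply_iff_period_dvd]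
  · simpa [cyclePoint] using he.zpow_apply_ne_zpow_apply hm hx s t
  · simpa [cyclePoint] using (he.zpow_apply_ne_zpow_apply hm hx t s).symm
  · rw [← e.injective.eq_iff, apply_cyclePoint_left he.involutive hm.involutive,
      apply_cyclePoint_left he.involutive hm.involutive]
    simp only [Bool.not_true, cyclePoint, cond_false, zpow_apply_eq_zpow_apply_iff_period_dvd,
      neg_sub_neg, dvd_sub_comm, true_and]

theorem ncard_orbit_closure (he : IsPairingOn e S) (hm : IsPairingOn m S) {x : α}
    (hx : x ∈ S) : (orbit (Subgroup.closure {e, m}) x).ncard = 2 * period (m * e) x := by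
  have hrange : orbit (Subgroup.closure {e, m}) x =
      range fun p : ℤ × Bool => cyclePoint e m x p.1 p.2 := by
    ext y
    simp [mem_orbit_closure_iff he.involutive hm.involutive]
  have hker : ∀ p q : ℤ × Bool, cyclePoint e m x p.1 p.2 = cyclePoint e m x q.1 q.2 ↔
      Prod.map (Int.cast : ℤ → ZMod (period (m * e) x)) id p = Prod.map Int.cast id q := by
    intro p q
    rw [he.cyclePoint_eq_cyclePoint_iff hm hx, Prod.map_apply, Prod.map_apply, Prod.ext_iff,
      ZMod.intCast_eq_intCast_iff_dvd_sub, dvd_sub_comm, and_comm, id, id]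
  have hsurj :=
    (ZMod.intCast_surjective (n := period (m * e) x)).prodMap (surjective_id (α := Bool))
  rw [hrange, ncard_range_eq_of_ker_eq hker, hsurj.range_eq, ncard_univ, Nat.card_prod,
    Nat.card_zmod, Nat.card_eq_fintype_card, Fintype.card_bool, mul_comm]

theorem mem_of_mem_image_orbitRep {S : Finset α} (he : IsPairingOn e S) (hm : IsPairingOn m S)
    {r : α} (hr : r ∈ S.image (orbitRep (Subgroup.closure {e, m}))) : r ∈ S := by
  obtain ⟨x, hx, rfl⟩ := Finset.mem_image.1 hr
  exact he.orbit_subset hm hx (orbitRep_mem_orbit x)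

theorem cyclePoint_eq_cyclePoint_iff_of_mem_image {S : Finset α} (he : IsPairingOn e S)
    (hm : IsPairingOn m S) {r₁ r₂ : α} (hr₁ : r₁ ∈ S.image (orbitRep (Subgroup.closure {e, m})))
    (hr₂ : r₂ ∈ S.image (orbitRep (Subgroup.closure {e, m}))) {s t : ℤ} {b c : Bool} :
    cyclePoint e m r₁ s b = cyclePoint e m r₂ t c ↔
      r₁ = r₂ ∧ b = c ∧ (period (m * e) r₁ : ℤ) ∣ s - t := by
  have hS := he.mem_of_mem_image_orbitRep hm hr₁
  refine ⟨fun h => ?_, fun ⟨hr, hbc⟩ => hr ▸ (he.cyclePoint_eq_cyclePoint_iff hm hS).2 hbc⟩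
  have horbit : orbit (Subgroup.closure {e, m}) r₁ = orbit (Subgroup.closure {e, m}) r₂ :=
    (orbit_eq_iff.2 (cyclePoint_mem_orbit e m r₁ s b)).symm.trans
      (orbit_eq_iff.2 (h ▸ cyclePoint_mem_orbit e m r₂ t c))
  obtain rfl : r₁ = r₂ := by
    rw [← orbitRep_eq_of_mem_image hr₁, ← orbitRep_eq_of_mem_image hr₂, orbitRep_eq_orbitRep_iff,
      ← orbit_eq_iff, horbit]
  exact ⟨rfl, (he.cyclePoint_eq_cyclePoint_iff hm hS).1 h⟩

theorem card_filter_orbitRep_eq {S : Finset α} {m' : Perm α} (he : IsPairingOn e S)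
    (hm : IsPairingOn m S) (hm' : IsPairingOn m' S)
    (hcard : ∀ n, #{x ∈ S | (orbit (Subgroup.closure {e, m}) x).ncard = n} =
      #{x ∈ S | (orbit (Subgroup.closure {e, m'}) x).ncard = n}) (n : ℕ) :
    #{r ∈ S.image (orbitRep (Subgroup.closure {e, m})) |
        (orbit (Subgroup.closure {e, m}) r).ncard = n} =
      #{r ∈ S.image (orbitRep (Subgroup.closure {e, m'})) |
        (orbit (Subgroup.closure {e, m'}) r).ncard = n} := by
  rcases n.eq_zero_or_pos with rfl | hn
  · have hempty {m : Perm α} (hm : IsPairingOn m S) :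
        #{r ∈ S.image (orbitRep (Subgroup.closure {e, m})) |
          (orbit (Subgroup.closure {e, m}) r).ncard = 0} = 0 := by
      rw [Finset.card_eq_zero, Finset.filter_eq_empty_iff]
      intro r hr
      exact ncard_ne_zero_of_mem (mem_orbit_self _)
        (S.finite_toSet.subset (he.orbit_subset hm (he.mem_of_mem_image_orbitRep hm hr)))
    rw [hempty hm, hempty hm']
  · refine Nat.eq_of_mul_eq_mul_left hn ?_
    rw [← card_filter_ncard_orbit_eq fun _ => he.orbit_subset hm, hcard,
      card_filter_ncard_orbit_eq fun _ => he.orbit_subset hm']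

end IsPairingOn

theorem exists_conj_of_card_filter_ncard_orbit_eq {e m m' : Perm α} {S : Finset α}
    (he : IsPairingOn e S) (hm : IsPairingOn m S) (hm' : IsPairingOn m' S)
    (hcard : ∀ n, #{x ∈ S | (orbit (Subgroup.closure {e, m}) x).ncard = n} =
      #{x ∈ S | (orbit (Subgroup.closure {e, m'}) x).ncard = n}) :
    ∃ π : α → α, InjOn π S ∧ MapsTo π S S ∧ ∀ x ∈ S, π (e x) = e (π x) ∧ π (m x) = m' (π x) := by
  cases isEmpty_or_nonempty α
  · exact ⟨id, injOn_id _, mapsTo_id _, fun x => isEmptyElim x⟩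
  set R := S.image (orbitRep (Subgroup.closure {e, m}))
  obtain ⟨β, hβ⟩ := Finset.exists_equiv_apply_eq_of_card_filter_eq
    (f := fun r => (orbit (Subgroup.closure {e, m}) r).ncard)
    (g := fun r => (orbit (Subgroup.closure {e, m'}) r).ncard)
    (he.card_filter_orbitRep_eq hm hm' hcard)
  have hperiod (r : R) : period (m' * e) (β r : α) = period (m * e) (r : α) := by
    have := hβ r
    rw [he.ncard_orbit_closure hm' (he.mem_of_mem_image_orbitRep hm' (β r).2),
      he.ncard_orbit_closure hm (he.mem_of_mem_image_orbitRep hm r.2)] at this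
    omega
  -- `π` sends the point at position `(s, b)` on the cycle of `r` to the point at the same
  -- position on the matched cycle of `β r`.
  let Ψ (p : R × ℤ × Bool) : α := cyclePoint e m p.1 p.2.1 p.2.2
  let Ψ' (p : R × ℤ × Bool) : α := cyclePoint e m' (β p.1) p.2.1 p.2.2
  have hker (p q) : Ψ p = Ψ q ↔ Ψ' p = Ψ' q := by
    simp only [Ψ, Ψ', he.cyclePoint_eq_cyclePoint_iff_of_mem_image hm p.1.2 q.1.2,
      he.cyclePoint_eq_cyclePoint_iff_of_mem_image hm' (β p.1).2 (β q.1).2, hperiod,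
      Subtype.coe_inj, β.injective.eq_iff]
  obtain ⟨π, hπ, hπΨ⟩ := exists_injOn_range_comp_eq hker
  have hΨ (p) : π (Ψ p) = Ψ' p := congrFun hπΨ p
  have hsurj : ∀ x ∈ S, ∃ p, Ψ p = x := fun x hx =>
    let ⟨s, b, h⟩ := exists_cyclePoint_orbitRep_eq he.involutive hm.involutive x
    ⟨(⟨_, Finset.mem_image_of_mem _ hx⟩, s, b), h⟩
  refine ⟨π, hπ.mono fun x hx => hsurj x hx, fun x hx => ?_, fun x hx => ?_⟩
  · obtain ⟨p, rfl⟩ := hsurj x hx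
    rw [hΨ]
    exact he.orbit_subset hm' (he.mem_of_mem_image_orbitRep hm' (β p.1).2)
      (cyclePoint_mem_orbit e m' _ _ _)
  · obtain ⟨⟨r, s, b⟩, rfl⟩ := hsurj x hx
    constructor
    · rw [show e (Ψ (r, s, b)) = Ψ (r, -s, !b) from
        apply_cyclePoint_left he.involutive hm.involutive _ _ _, hΨ, hΨ]
      exact (apply_cyclePoint_left he.involutive hm'.involutive _ _ _).symm
    · rw [show m (Ψ (r, s, b)) = Ψ (r, 1 - s, !b) from
        apply_cyclePoint_right he.involutive hm.involutive _ _ _, hΨ, hΨ]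
      exact (apply_cyclePoint_right he.involutive hm'.involutive _ _ _).symm

end Equiv.Perm

namespace PairPartition

variable {k : ℕ}

theorem isPairingOn_perm (m : PairPartition k) :
    m.perm.IsPairingOn (Finset.Icc 1 (2 * k) : Set ℕ) :=
  ⟨m.invol, fun a => show m.f a ≠ a ↔ _ by simpa using m.moves a⟩

theorem card_filter_ncard_gammaOrbit_eq_mul_cycleCount (m : PairPartition k) (ℓ : ℕ) :
    #{a ∈ Finset.Icc 1 (2 * k) | (gammaOrbit m a).ncard = 2 * ℓ} = 2 * ℓ * cycleCount m ℓ := by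
  have h := card_filter_ncard_orbit_eq
    (fun _ hx => (triv k).isPairingOn_perm.orbit_subset m.isPairingOn_perm hx) (2 * ℓ)
  rcases ℓ.eq_zero_or_pos with rfl | hℓ
  · simpa [gammaOrbit] using h
  · unfold cycleCount gammaOrbit
    rw [h, Nat.mul_div_cancel_left _ (by omega)]

theorem SameCosetType.card_filter_ncard_gammaOrbit_eq {m m' : PairPartition k}
    (h : SameCosetType m m') (n : ℕ) :
    #{a ∈ Finset.Icc 1 (2 * k) | (gammaOrbit m a).ncard = n} =
      #{a ∈ Finset.Icc 1 (2 * k) | (gammaOrbit m' a).ncard = n} := by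
  obtain ⟨ℓ, rfl | rfl⟩ := Nat.even_or_odd' n
  · rw [card_filter_ncard_gammaOrbit_eq_mul_cycleCount,
      card_filter_ncard_gammaOrbit_eq_mul_cycleCount, h ℓ]
  · have hodd (m : PairPartition k) :
        #{a ∈ Finset.Icc 1 (2 * k) | (gammaOrbit m a).ncard = 2 * ℓ + 1} = 0 := by
      rw [Finset.card_eq_zero, Finset.filter_eq_empty_iff]
      intro a ha
      rw [gammaOrbit, (triv k).isPairingOn_perm.ncard_orbit_closure m.isPairingOn_perm ha]
      omega
    rw [hodd, hodd]

theorem SameCosetType.exists_conj {m m' : PairPartition k} (h : SameCosetType m m') :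
    ∃ π : ℕ → ℕ, InjOn π (Finset.Icc 1 (2 * k)) ∧
      MapsTo π (Finset.Icc 1 (2 * k)) (Finset.Icc 1 (2 * k)) ∧
      ∀ a ∈ Finset.Icc 1 (2 * k), π (trivFun k a) = trivFun k (π a) ∧ π (m.f a) = m'.f (π a) :=
  Equiv.Perm.exists_conj_of_card_filter_ncard_orbit_eq (triv k).isPairingOn_perm
    m.isPairingOn_perm m'.isPairingOn_perm h.card_filter_ncard_gammaOrbit_eq

theorem two_mul_add_one_mem_Icc {a : ℕ} (ha : a ∈ Finset.range k) :
    2 * a + 1 ∈ Finset.Icc 1 (2 * k) := by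
  simp only [Finset.mem_range, Finset.mem_Icc] at ha ⊢
  omega

theorem trivFun_two_mul_add_one {a : ℕ} (ha : a ∈ Finset.range k) :
    trivFun k (2 * a + 1) = 2 * a + 2 := by
  simp only [Finset.mem_range] at ha
  unfold trivFun
  split_ifs <;> omega

theorem trivFun_eq_of_div_two_eq {y z : ℕ} (hy : y ∈ Finset.Icc 1 (2 * k))
    (hz : z ∈ Finset.Icc 1 (2 * k)) (hyz : y ≠ z) (hdiv : (y - 1) / 2 = (z - 1) / 2) :
    y = trivFun k z := by
  rw [Finset.mem_Icc] at hy hz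
  unfold trivFun
  split_ifs <;> omega

theorem prod_comp_eq_of_commute_trivFun {R : Type*} [CommMonoid R] (F : ℕ → R)
    (hF : ∀ x ∈ Finset.Icc 1 (2 * k), F (trivFun k x) = F x) {π : ℕ → ℕ}
    (hinj : InjOn π (Finset.Icc 1 (2 * k)))
    (hmaps : MapsTo π (Finset.Icc 1 (2 * k)) (Finset.Icc 1 (2 * k)))
    (hcomm : ∀ x ∈ Finset.Icc 1 (2 * k), π (trivFun k x) = trivFun k (π x)) :
    ∏ a ∈ Finset.range k, F (π (2 * a + 1)) = ∏ a ∈ Finset.range k, F (2 * a + 1) := by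
  -- `π` maps the pair `{2a+1, 2a+2}` onto the pair `{2c+1, 2c+2}` with `c = block a`.
  let block (a : ℕ) : ℕ := (π (2 * a + 1) - 1) / 2
  have hblock_mem : ∀ a ∈ Finset.range k, block a ∈ Finset.range k := fun a ha => by
    have := Finset.mem_Icc.1 (hmaps (two_mul_add_one_mem_Icc ha))
    simp only [Finset.mem_range, block]
    omega
  have hblock_inj : InjOn block (Finset.range k) := by
    intro a ha b hb hab
    by_contra hne
    have hπne : π (2 * a + 1) ≠ π (2 * b + 1) := fun h => hne <| by
      have := hinj (two_mul_add_one_mem_Icc ha) (two_mul_add_one_mem_Icc hb) h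
      omega
    have h := trivFun_eq_of_div_two_eq (hmaps (two_mul_add_one_mem_Icc ha))
      (hmaps (two_mul_add_one_mem_Icc hb)) hπne hab
    rw [← hcomm _ (two_mul_add_one_mem_Icc hb)] at h
    have : 2 * a + 1 = trivFun k (2 * b + 1) := hinj (two_mul_add_one_mem_Icc ha)
      ((triv k).isPairingOn_perm.apply_mem_iff.2 (two_mul_add_one_mem_Icc hb)) h
    rw [trivFun_two_mul_add_one hb] at this
    omega
  refine Finset.prod_nbij block hblock_mem hblock_inj
    (Finset.surjOn_of_injOn_of_card_le block hblock_mem hblock_inj le_rfl) fun a ha => ?_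
  have hc := two_mul_add_one_mem_Icc (hblock_mem a ha)
  by_cases h : π (2 * a + 1) = 2 * block a + 1
  · rw [h]
  · rw [trivFun_eq_of_div_two_eq (hmaps (two_mul_add_one_mem_Icc ha)) hc h
      (by simp only [block]; omega), hF _ hc]

end PairPartition

theorem StronglyAdmissible.apply_eq_apply_iff {N k : ℕ} {m m' : PairPartition k}
    {i i' : ℕ → Fin N} {π : ℕ → ℕ} (hi : StronglyAdmissible k m i)
    (hi' : StronglyAdmissible k m' i') (hinj : InjOn π (Finset.Icc 1 (2 * k)))
    (hmaps : MapsTo π (Finset.Icc 1 (2 * k)) (Finset.Icc 1 (2 * k)))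
    (hconj : ∀ a ∈ Finset.Icc 1 (2 * k), π (m.f a) = m'.f (π a)) {a b : ℕ}
    (ha : a ∈ Finset.Icc 1 (2 * k)) (hb : b ∈ Finset.Icc 1 (2 * k)) :
    i a = i b ↔ i' (π a) = i' (π b) := by
  have hma : m.f a ∈ Finset.Icc 1 (2 * k) := m.isPairingOn_perm.apply_mem_iff.2 ha
  obtain ⟨ha₁, ha₂⟩ := Finset.mem_Icc.1 ha
  obtain ⟨hb₁, hb₂⟩ := Finset.mem_Icc.1 hb
  obtain ⟨hπa₁, hπa₂⟩ := Finset.mem_Icc.1 (hmaps ha)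
  obtain ⟨hπb₁, hπb₂⟩ := Finset.mem_Icc.1 (hmaps hb)
  rw [hi a b ha₁ ha₂ hb₁ hb₂, hi' _ _ hπa₁ hπa₂ hπb₁ hπb₂, ← hconj a ha, hinj.eq_iff ha hb,
    hinj.eq_iff hma hb]

theorem prodEntries_congr {N k : ℕ} {i j : ℕ → Fin N}
    (h : ∀ a ∈ Finset.Icc 1 (2 * k), i a = j a) (A : Matrix (Fin N) (Fin N) ℝ) :
    prodEntries k i A = prodEntries k j A :=
  Finset.prod_congr rfl fun a ha => by
    rw [h _ (PairPartition.two_mul_add_one_mem_Icc ha),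
      h _ (by simp only [Finset.mem_range, Finset.mem_Icc] at ha ⊢; omega)]

theorem prodEntries_submatrix {N k : ℕ} (σ : Equiv.Perm (Fin N)) (i : ℕ → Fin N)
    (A : Matrix (Fin N) (Fin N) ℝ) :
    prodEntries k i (A.submatrix σ σ) = prodEntries k (σ ∘ i) A :=
  rfl

theorem prodEntries_comp_of_commute_trivFun {N k : ℕ} (i : ℕ → Fin N) {π : ℕ → ℕ}
    (hinj : InjOn π (Finset.Icc 1 (2 * k)))
    (hmaps : MapsTo π (Finset.Icc 1 (2 * k)) (Finset.Icc 1 (2 * k)))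
    (hcomm : ∀ x ∈ Finset.Icc 1 (2 * k), π (trivFun k x) = trivFun k (π x))
    {A : Matrix (Fin N) (Fin N) ℝ} (hA : Aᵀ = A) :
    prodEntries k (i ∘ π) A = prodEntries k i A := by
  let F (x : ℕ) : ℝ := A (i x) (i (trivFun k x))
  have hF : ∀ x ∈ Finset.Icc 1 (2 * k), F (trivFun k x) = F x := fun x _ => by
    simp only [F, show trivFun k (trivFun k x) = x from (triv k).invol x]
    exact congrFun (congrFun hA _) _
  calc prodEntries k (i ∘ π) A = ∏ a ∈ Finset.range k, F (π (2 * a + 1)) :=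
        Finset.prod_congr rfl fun a ha => by
          simp only [F, comp_apply, ← hcomm _ (PairPartition.two_mul_add_one_mem_Icc ha),
            PairPartition.trivFun_two_mul_add_one ha]
    _ = ∏ a ∈ Finset.range k, F (2 * a + 1) :=
        PairPartition.prod_comp_eq_of_commute_trivFun F hF hinj hmaps hcomm
    _ = prodEntries k i A :=
        Finset.prod_congr rfl fun a ha => by
          simp only [F, PairPartition.trivFun_two_mul_add_one ha]

theorem Matrix.permMatrix_mem_orthogonalGroup {n R : Type*} [Fintype n] [DecidableEq n]
    [CommRing R] (σ : Equiv.Perm n) : σ.permMatrix R ∈ Matrix.orthogonalGroup n R := by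
  rw [Matrix.mem_orthogonalGroup_iff, Matrix.transpose_permMatrix, ← Matrix.permMatrix_mul,
    inv_mul_cancel, Matrix.permMatrix_one]

theorem Matrix.permMatrix_mul_mul_transpose {n R : Type*} [Fintype n] [DecidableEq n]
    [CommRing R] (σ : Equiv.Perm n) (A : Matrix n n R) :
    σ.permMatrix R * A * (σ.permMatrix R)ᵀ = A.submatrix σ σ := by
  rw [Matrix.transpose_permMatrix, PEquiv.toMatrix_toPEquiv_mul, PEquiv.mul_toMatrix_toPEquiv]
  rfl

instance matrixBorelSpace {N : ℕ} : BorelSpace (Matrix (Fin N) (Fin N) ℝ) :=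
  inferInstanceAs (BorelSpace (Fin N → Fin N → ℝ))

instance orthBorelSpace {N : ℕ} : BorelSpace (OrthGroup N) := ⟨rfl⟩

theorem measurable_grassMap (N M : ℕ) : Measurable (grassMap N M) :=
  ((continuous_subtype_val.matrix_mul continuous_const).matrix_mul
    continuous_subtype_val.matrix_transpose).measurable

theorem measurable_prodEntries {N : ℕ} (k : ℕ) (i : ℕ → Fin N) :
    Measurable (prodEntries k i) := by
  unfold prodEntries
  fun_prop

theorem grassMap_mul {N M : ℕ} (g O : OrthGroup N) :
    grassMap N M (g * O) =
      (g : Matrix (Fin N) (Fin N) ℝ) * grassMap N M O * (g : Matrix (Fin N) (Fin N) ℝ)ᵀ := by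
  simp only [grassMap, Submonoid.coe_mul, Matrix.transpose_mul, Matrix.mul_assoc]

theorem transpose_grassMap {N M : ℕ} (O : OrthGroup N) : (grassMap N M O)ᵀ = grassMap N M O := by
  simp [grassMap, IMN, Matrix.transpose_mul, Matrix.mul_assoc]

theorem integral_map_eq_of_comp_mul_left {G X E : Type*} [Group G] [MeasurableSpace G]
    [MeasurableMul G] [MeasurableSpace X] [NormedAddCommGroup E] [NormedSpace ℝ E]
    {ν : Measure G} [ν.IsMulLeftInvariant] {φ : G → X} (hφ : Measurable φ) {F F' : X → E}
    (hF : AEStronglyMeasurable F (ν.map φ)) (hF' : AEStronglyMeasurable F' (ν.map φ)) (g : G)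
    (h : ∀ x, F (φ (g * x)) = F' (φ x)) : ∫ y, F y ∂ν.map φ = ∫ y, F' y ∂ν.map φ := by
  rw [integral_map hφ.aemeasurable hF, integral_map hφ.aemeasurable hF',
    ← integral_mul_left_eq_self _ g]
  simp_rw [h]

theorem weingarten_A_wellDefined_cosetType_invariant_general
    (k N M : ℕ)
    (ν : Measure (OrthGroup N))
    (hinv : ∀ g : OrthGroup N, Measure.map (fun x => g * x) ν = ν)
    (m m' : PairPartition k) (hsame : SameCosetType m m')
    (i i' : ℕ → Fin N)
    (hi : StronglyAdmissible k m i) (hi' : StronglyAdmissible k m' i') :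
    ∫ A, prodEntries k i A ∂(Measure.map (grassMap N M) ν) =
      ∫ A, prodEntries k i' A ∂(Measure.map (grassMap N M) ν) := by
  obtain ⟨π, hinj, hmaps, hπ⟩ := hsame.exists_conj
  obtain ⟨σ, hσ⟩ := Equiv.Perm.exists_apply_eq_of_ker_eq
    (f := fun a : Finset.Icc 1 (2 * k) => i a) (g := fun a => i' (π a)) fun a b =>
      hi.apply_eq_apply_iff hi' hinj hmaps (fun a ha => (hπ a ha).2) a.2 b.2
  have : ν.IsMulLeftInvariant := ⟨hinv⟩
  refine integral_map_eq_of_comp_mul_left (measurable_grassMap N M)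
    (measurable_prodEntries k i).aestronglyMeasurable
    (measurable_prodEntries k i').aestronglyMeasurable
    ⟨σ.permMatrix ℝ, Matrix.permMatrix_mem_orthogonalGroup σ⟩ fun O => ?_
  rw [grassMap_mul, Subtype.coe_mk, Matrix.permMatrix_mul_mul_transpose, prodEntries_submatrix,
    prodEntries_congr (j := i' ∘ π) fun a ha => hσ ⟨a, ha⟩,
    prodEntries_comp_of_commute_trivFun i' hinj hmaps (fun a ha => (hπ a ha).1)
      (transpose_grassMap O)]

/-- **Well-definedness and coset-type invariance of the Grassmannian Weingarten
function** (Section 3.1).  Fix `k ≥ 1`, `k ≤ N` and `1 ≤ M < N`, and let `μ` be the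
pushforward of the normalised Haar measure `ν` on `O(N)` under `O ↦ O I_{M,N} Oᵀ`.
If `𝔪, 𝔪' ∈ 𝒫_k` have the same coset-type, then for any `i` strongly admissible for
`𝔪` and any `i'` strongly admissible for `𝔪'`,
`∫ ∏_a A_{i(2a-1) i(2a)} dμ = ∫ ∏_a A_{i'(2a-1) i'(2a)} dμ`.
In particular `Wg^A(𝔪)` is well defined and depends only on the coset-type of `𝔪`. -/
theorem weingarten_A_wellDefined_cosetType_invariant
    (k N M : ℕ) (hk : 1 ≤ k) (hkN : k ≤ N) (hM : 1 ≤ M) (hMN : M < N)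
    (ν : Measure (OrthGroup N)) (hprob : IsProbabilityMeasure ν)
    (hinv : ∀ g : OrthGroup N, Measure.map (fun x => g * x) ν = ν)
    (m m' : PairPartition k) (hsame : SameCosetType m m')
    (i i' : ℕ → Fin N)
    (hi : StronglyAdmissible k m i) (hi' : StronglyAdmissible k m' i') :
    ∫ A, prodEntries k i A ∂(Measure.map (grassMap N M) ν) =
      ∫ A, prodEntries k i' A ∂(Measure.map (grassMap N M) ν) :=
  weingarten_A_wellDefined_cosetType_invariant_general k N M ν hinv m m' hsame i i' hi hi'
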